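/- Let z ∈ ℝ and let σ : ℝ → ℝ be continuously differentiable with bounded derivative. Let y : [0,∞) × ℝ → ℝ be smooth, such that t ↦ y(t,·) is a C¹ map into Schwartz space, and suppose y solves the transport equation ∂_t y(t,x) = −z σ(x) ∂_x y(t,x). Then for every t ≥ 0, ‖y(t,·)‖_{H¹}² ≤ ‖y(0,·)‖_{H¹}² e^{|z| ‖σ'‖_{L^∞} t}. -/

import Mathlib

open MeasureTheory SchwartzMap Filter Set

namespace Stmt2Aux

noncomputable def Bnd (f : 𝓢(ℝ, ℝ)) : ℝ :=
  SchwartzMap.seminorm ℝ 0 0 f + SchwartzMap.seminorm ℝ 2 0 f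

lemma Bnd_nonneg (f : 𝓢(ℝ, ℝ)) : 0 ≤ Bnd f :=
  add_nonneg (apply_nonneg _ _) (apply_nonneg _ _)

lemma abs_le_Bnd (f : 𝓢(ℝ, ℝ)) (x : ℝ) : (1 + x ^ 2) * |f x| ≤ Bnd f := by
  have h0 := SchwartzMap.norm_le_seminorm ℝ f x
  have h2 := SchwartzMap.norm_pow_mul_le_seminorm ℝ f 2 x
  simp only [Real.norm_eq_abs, sq_abs] at h0 h2
  unfold Bnd
  nlinarith [abs_nonneg (f x)]

lemma Bnd_continuous : Continuous Bnd := by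
  have h1 := (schwartz_withSeminorms ℝ ℝ ℝ).continuous_seminorm (0, 0)
  have h2 := (schwartz_withSeminorms ℝ ℝ ℝ).continuous_seminorm (2, 0)
  exact h1.add h2


lemma decay_helper {h : ℝ → ℝ} {C : ℝ} (hC : 0 ≤ C) (hb : ∀ x, |h x| ≤ C * (1 + x ^ 2))
    (f g : 𝓢(ℝ, ℝ)) (x : ℝ) :
    |h x * (f x * g x)| ≤ C * Bnd f * Bnd g * (1 + x ^ 2)⁻¹ := by
  have hS0 : (0:ℝ) < 1 + x ^ 2 := by positivity
  rw [abs_mul, abs_mul]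
  rw [show C * Bnd f * Bnd g * (1 + x ^ 2)⁻¹ = (C * Bnd f * Bnd g) / (1 + x ^ 2) by ring,
    le_div_iff₀ hS0]
  have h1 := abs_le_Bnd f x
  have h2 := abs_le_Bnd g x
  calc |h x| * (|f x| * |g x|) * (1 + x ^ 2)
      ≤ (C * (1 + x ^ 2)) * (|f x| * |g x|) * (1 + x ^ 2) := by
        gcongr
        exact hb x
    _ = C * (((1 + x ^ 2) * |f x|) * ((1 + x ^ 2) * |g x|)) := by ring
    _ ≤ C * (Bnd f * Bnd g) :=
        mul_le_mul_of_nonneg_left (mul_le_mul h1 h2 (by positivity) (Bnd_nonneg f)) hC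
    _ = C * Bnd f * Bnd g := by ring

/-- Integrability workhorse: `h` of temperate growth times two Schwartz-decaying factors. -/
lemma key_integrable {h : ℝ → ℝ} {C : ℝ}
    (hm : AEStronglyMeasurable h (volume : Measure ℝ))
    (hb : ∀ x, |h x| ≤ C * (1 + x ^ 2)) (f g : 𝓢(ℝ, ℝ)) :
    Integrable (fun x => h x * (f x * g x)) := by
  have hC : 0 ≤ C := by
    have := (abs_nonneg (h 0)).trans (hb 0)
    nlinarith
  refine (Integrable.mono' ((integrable_inv_one_add_sq).const_mul (C * Bnd f * Bnd g))
    (hm.mul (f.continuous.mul g.continuous).aestronglyMeasurable) ?_)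
  filter_upwards with x
  rw [Real.norm_eq_abs]
  exact decay_helper hC hb f g x

lemma sq_integrable (f : 𝓢(ℝ, ℝ)) : Integrable (fun x => (f x) ^ 2) := by
  have := key_integrable (h := fun _ => (1:ℝ)) (C := 1)
    aestronglyMeasurable_const (fun x => by simp; nlinarith [sq_nonneg x]) f f
  refine this.congr ?_
  filter_upwards with x
  ring

/-- The integral over `ℝ` of a derivative vanishing at infinity is zero. -/
lemma integral_deriv_eq_zero {g g' : ℝ → ℝ} (hg : ∀ x, HasDerivAt g (g' x) x)
    (hint : Integrable g') (htop : Tendsto g atTop (nhds 0))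
    (hbot : Tendsto g atBot (nhds 0)) : ∫ x, g' x = 0 := by
  have h1 : Tendsto (fun n : ℕ => ∫ x in (-(n:ℝ))..(n:ℝ), g' x) atTop
      (nhds (∫ x, g' x)) :=
    intervalIntegral_tendsto_integral hint
      (tendsto_neg_atTop_atBot.comp tendsto_natCast_atTop_atTop)
      tendsto_natCast_atTop_atTop
  have h2 : ∀ n : ℕ, ∫ x in (-(n:ℝ))..(n:ℝ), g' x = g n - g (-(n:ℝ)) := fun n =>
    intervalIntegral.integral_eq_sub_of_hasDerivAt (fun x _ => hg x)
      hint.intervalIntegrable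
  have h3 : Tendsto (fun n : ℕ => g (n:ℝ) - g (-(n:ℝ))) atTop (nhds 0) := by
    have := (htop.comp tendsto_natCast_atTop_atTop).sub
      (hbot.comp (tendsto_neg_atTop_atBot.comp tendsto_natCast_atTop_atTop))
    simpa using this
  have := tendsto_nhds_unique (by simpa only [h2] using h1) h3
  exact this


section Sigma

variable {σ : ℝ → ℝ} {M : ℝ} (hσ : ContDiff ℝ 1 σ) (hM : ∀ x : ℝ, |deriv σ x| ≤ M)

include hσ hM in
lemma sigma_growth : ∀ x : ℝ, |σ x| ≤ (|σ 0| + M) * (1 + x ^ 2) := by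
  intro x
  have hM0 : 0 ≤ M := (abs_nonneg _).trans (hM 0)
  have hlip : LipschitzWith M.toNNReal σ := by
    apply lipschitzWith_of_nnnorm_deriv_le (hσ.differentiable one_ne_zero)
    intro x
    rw [← NNReal.coe_le_coe, coe_nnnorm, Real.norm_eq_abs, Real.coe_toNNReal _ hM0]
    exact hM x
  have := hlip.dist_le_mul x 0
  simp only [Real.dist_eq, sub_zero, Real.coe_toNNReal _ hM0] at this
  have h1 : |σ x| ≤ |σ 0| + M * |x| := by
    have := abs_sub_abs_le_abs_sub (σ x) (σ 0)
    linarith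
  have h2 : |x| ≤ 1 + x ^ 2 := by nlinarith [abs_nonneg x, sq_abs x]
  nlinarith [abs_nonneg (σ 0), abs_nonneg x]

/-- Functions decaying like `(1+x²)⁻¹` tend to zero at `±∞`. -/
lemma tendsto_of_decay {h : ℝ → ℝ} {C : ℝ} (hb : ∀ x, |h x| ≤ C * (1 + x ^ 2)⁻¹) :
    Tendsto h atTop (nhds 0) ∧ Tendsto h atBot (nhds 0) := by
  have hsq_top : Tendsto (fun x : ℝ => x ^ 2) atTop atTop := by
    exact tendsto_pow_atTop (by norm_num)
  have hsq_bot : Tendsto (fun x : ℝ => x ^ 2) atBot atTop := by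
    have := hsq_top.comp tendsto_neg_atBot_atTop
    simpa [Function.comp_def] using this
  have key : ∀ (l : Filter ℝ), Tendsto (fun x : ℝ => x ^ 2) l atTop →
      Tendsto h l (nhds 0) := by
    intro l hl
    have h1 : Tendsto (fun x : ℝ => 1 + x ^ 2) l atTop :=
      tendsto_atTop_add_const_left _ 1 hl
    have h2 : Tendsto (fun x : ℝ => C * (1 + x ^ 2)⁻¹) l (nhds 0) := by
      simpa using (h1.inv_tendsto_atTop).const_mul C
    exact squeeze_zero_norm (fun x => by simpa [Real.norm_eq_abs] using hb x) h2
  exact ⟨key _ hsq_top, key _ hsq_bot⟩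
include hσ hM in
lemma ibp (f : 𝓢(ℝ, ℝ)) :
    ∫ x, σ x * (f x * deriv (⇑f) x) = -(∫ x, deriv σ x * (f x * f x)) / 2 := by
  have hM0 : 0 ≤ M := (abs_nonneg _).trans (hM 0)
  have hA0 : 0 ≤ |σ 0| + M := add_nonneg (abs_nonneg _) hM0
  set W : 𝓢(ℝ, ℝ) := derivCLM ℝ ℝ f with hWdef
  have hW : ⇑W = deriv (⇑f) := funext fun x => derivCLM_apply ℝ f x
  have hmσ : AEStronglyMeasurable σ (volume : Measure ℝ) :=
    hσ.continuous.aestronglyMeasurable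
  have hmσ' : AEStronglyMeasurable (deriv σ) (volume : Measure ℝ) :=
    (hσ.continuous_deriv le_rfl).aestronglyMeasurable
  have hbσ' : ∀ x : ℝ, |deriv σ x| ≤ M * (1 + x ^ 2) := fun x => by
    nlinarith [hM x, sq_nonneg x]
  have I1 : Integrable (fun x => deriv σ x * (f x * f x)) := key_integrable hmσ' hbσ' f f
  have I2 : Integrable (fun x => σ x * (f x * W x)) :=
    key_integrable hmσ (sigma_growth hσ hM) f W
  have hfd : ∀ x : ℝ, HasDerivAt (⇑f) (W x) x := fun x => by
    have h := (f.differentiableAt (x := x)).hasDerivAt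
    rw [show W x = deriv (⇑f) x from congrFun hW x]
    exact h
  have hσd : ∀ x : ℝ, HasDerivAt σ (deriv σ x) x := fun x =>
    ((hσ.differentiable one_ne_zero) x).hasDerivAt
  set G' : ℝ → ℝ := fun x => deriv σ x * (f x * f x) + σ x * (W x * f x + f x * W x)
    with hG'def
  have hg : ∀ x : ℝ, HasDerivAt (fun x => σ x * (f x * f x)) (G' x) x := fun x =>
    (hσd x).mul ((hfd x).mul (hfd x))
  have I3 : Integrable (fun x => σ x * (W x * f x + f x * W x)) := by
    have : (fun x => σ x * (W x * f x + f x * W x))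
        = fun x => 2 * (σ x * (f x * W x)) := funext fun x => by ring
    rw [this]
    exact I2.const_mul 2
  have IG' : Integrable G' := I1.add I3
  have hdecay := fun x => decay_helper hA0 (sigma_growth hσ hM) f f x
  have htend := tendsto_of_decay hdecay
  have hzero : ∫ x, G' x = 0 :=
    integral_deriv_eq_zero hg IG' htend.1 htend.2
  rw [hG'def, integral_add I1 I3] at hzero
  have e3 : ∫ x, σ x * (W x * f x + f x * W x) = 2 * ∫ x, σ x * (f x * W x) := by
    rw [show (fun x => σ x * (W x * f x + f x * W x))
        = fun x => 2 * (σ x * (f x * W x)) from funext fun x => by ring]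
    exact MeasureTheory.integral_const_mul 2 _
  rw [e3] at hzero
  rw [← hW]
  linarith

end Sigma

lemma deriv_eq (f : 𝓢(ℝ, ℝ)) : deriv (⇑f) = ⇑(derivCLM ℝ ℝ f) :=
  funext fun x => (derivCLM_apply ℝ f x).symm

lemma sq_deriv_integrable (f : 𝓢(ℝ, ℝ)) : Integrable (fun x => (deriv (⇑f) x) ^ 2) := by
  rw [deriv_eq f]
  exact sq_integrable _

lemma sq_bound {C : ℝ} (f : 𝓢(ℝ, ℝ)) (hb : Bnd f ≤ C) (x : ℝ) :
    (f x) ^ 2 ≤ C * C * (1 + x ^ 2)⁻¹ := by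
  have hS : (1:ℝ) ≤ 1 + x ^ 2 := by nlinarith [sq_nonneg x]
  have hS0 : (0:ℝ) < 1 + x ^ 2 := by positivity
  have hC0 : 0 ≤ C := (Bnd_nonneg f).trans hb
  have h1 : (1 + x ^ 2) * |f x| ≤ C := (abs_le_Bnd f x).trans hb
  have h2 : |f x| ≤ C := by nlinarith [abs_nonneg (f x)]
  have h3 : |f x| ≤ C * (1 + x ^ 2)⁻¹ := by
    rw [show |f x| = ((1 + x ^ 2) * |f x|) * (1 + x ^ 2)⁻¹ by field_simp]
    exact mul_le_mul_of_nonneg_right h1 (by positivity)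
  calc (f x) ^ 2 = |f x| * |f x| := by rw [← abs_mul, ← sq, abs_of_nonneg (sq_nonneg _)]
    _ ≤ C * (C * (1 + x ^ 2)⁻¹) := mul_le_mul h2 h3 (abs_nonneg _) hC0
    _ = C * C * (1 + x ^ 2)⁻¹ := by ring

variable {y : ℝ → 𝓢(ℝ, ℝ)}

lemma uniform_bound (hcont : Continuous y) (a b : ℝ) :
    ∃ C : ℝ, 0 ≤ C ∧ ∀ s ∈ Set.Icc a b, Bnd (y s) ≤ C ∧ Bnd (derivCLM ℝ ℝ (y s)) ≤ C ∧
      Bnd (derivCLM ℝ ℝ (derivCLM ℝ ℝ (y s))) ≤ C := by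
  set c : ℝ → ℝ := fun s => Bnd (y s) + Bnd (derivCLM ℝ ℝ (y s)) +
    Bnd (derivCLM ℝ ℝ (derivCLM ℝ ℝ (y s))) with hcdef
  have hccont : Continuous c := by
    refine ((Bnd_continuous.comp hcont).add
      (Bnd_continuous.comp ((derivCLM ℝ ℝ).continuous.comp hcont))).add
      (Bnd_continuous.comp ((derivCLM ℝ ℝ).continuous.comp
        ((derivCLM ℝ ℝ).continuous.comp hcont)))
  obtain ⟨C, hC⟩ := isCompact_Icc.exists_bound_of_continuousOn
    (s := Set.Icc a b) hccont.continuousOn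
  refine ⟨max C 0, le_max_right _ _, fun s hs => ?_⟩
  have h1 := hC s hs
  rw [Real.norm_eq_abs] at h1
  have h2 : c s ≤ max C 0 := (le_abs_self _).trans (h1.trans (le_max_left _ _))
  have n1 := Bnd_nonneg (y s)
  have n2 := Bnd_nonneg (derivCLM ℝ ℝ (y s))
  have n3 := Bnd_nonneg (derivCLM ℝ ℝ (derivCLM ℝ ℝ (y s)))
  simp only [hcdef] at h2
  exact ⟨by linarith, by linarith, by linarith⟩

/-- The time-derivative integrand of the `H¹` energy. -/
noncomputable def Fp (z : ℝ) (σ : ℝ → ℝ) (y : ℝ → 𝓢(ℝ, ℝ)) (t x : ℝ) : ℝ :=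
  (-2 * z) * (σ x * (y t x * deriv (⇑(y t)) x)
    + deriv σ x * (deriv (⇑(y t)) x * deriv (⇑(y t)) x)
    + σ x * (deriv (⇑(y t)) x * deriv (deriv (⇑(y t))) x))

section Main

variable {z : ℝ} {σ : ℝ → ℝ} {y : ℝ → 𝓢(ℝ, ℝ)}

lemma wPDE (hσ : ContDiff ℝ 1 σ)
    (hsmooth : ContDiffOn ℝ (⊤ : ℕ∞) (fun p : ℝ × ℝ => y p.1 p.2) (Set.Ici 0 ×ˢ Set.univ))
    (hPDE : ∀ t ∈ Set.Ici (0 : ℝ), ∀ x : ℝ,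
      HasDerivWithinAt (fun s => y s x) (-(z * σ x * deriv (⇑(y t)) x)) (Set.Ici 0) t)
    {t : ℝ} (ht : 0 < t) (x : ℝ) :
    HasDerivAt (fun s => deriv (⇑(y s)) x)
      (-(z * (deriv σ x * deriv (⇑(y t)) x + σ x * deriv (deriv (⇑(y t))) x))) t := by
  set g : ℝ × ℝ → ℝ := fun q => y q.1 q.2 with hgdef
  have hopen : IsOpen (Set.Ioi (0:ℝ) ×ˢ (Set.univ : Set ℝ)) := isOpen_Ioi.prod isOpen_univ
  have hsub : Set.Ioi (0:ℝ) ×ˢ (Set.univ : Set ℝ) ⊆ Set.Ici 0 ×ˢ Set.univ :=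
    Set.prod_mono Set.Ioi_subset_Ici_self subset_rfl
  have hg : ∀ q ∈ Set.Ioi (0:ℝ) ×ˢ (Set.univ : Set ℝ), ContDiffAt ℝ (⊤ : ℕ∞) g q := fun q hq =>
    (hsmooth.mono hsub).contDiffAt (hopen.mem_nhds hq)
  have hp : ((t, x) : ℝ × ℝ) ∈ Set.Ioi (0:ℝ) ×ˢ (Set.univ : Set ℝ) := ⟨ht, trivial⟩
  set Φ : ℝ × ℝ → (ℝ × ℝ) →L[ℝ] ℝ := fderiv ℝ g with hΦdef
  have hsymm : IsSymmSndFDerivAt ℝ g (t, x) :=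
    (hg _ hp).isSymmSndFDerivAt (by rw [minSmoothness_of_isRCLikeNormedField]; exact WithTop.coe_le_coe.mpr (le_top : (2:ℕ∞) ≤ ⊤))
  have hdiff : ∀ q ∈ Set.Ioi (0:ℝ) ×ˢ (Set.univ : Set ℝ), DifferentiableAt ℝ g q :=
    fun q hq => (hg q hq).differentiableAt (by simp)
  have hux : ∀ q ∈ Set.Ioi (0:ℝ) ×ˢ (Set.univ : Set ℝ),
      HasDerivAt (⇑(y q.1)) (Φ q (((0:ℝ), (1:ℝ)) : ℝ × ℝ)) q.2 := by
    intro q hq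
    have h1 : HasDerivAt (fun ξ : ℝ => ((q.1, ξ) : ℝ × ℝ)) (((0:ℝ), (1:ℝ)) : ℝ × ℝ) q.2 :=
      (hasDerivAt_const _ _).prodMk (hasDerivAt_id _)
    exact ((hdiff q hq).hasFDerivAt).comp_hasDerivAt q.2 h1
  have hΦ : DifferentiableAt ℝ Φ (t, x) := by
    have h2 : ContDiffAt ℝ 2 g (t, x) := (hg _ hp).of_le (by exact WithTop.coe_le_coe.mpr (le_top : (2:ℕ∞) ≤ ⊤))
    exact (h2.fderiv_right (m := 1) (by norm_num)).differentiableAt one_ne_zero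
  have hAt : HasDerivAt (fun s => Φ (s, x)) (fderiv ℝ Φ (t, x) (((1:ℝ), (0:ℝ)) : ℝ × ℝ)) t :=
    hΦ.hasFDerivAt.comp_hasDerivAt t ((hasDerivAt_id t).prodMk (hasDerivAt_const t x))
  have hA : HasDerivAt (fun s => Φ (s, x) (((0:ℝ), (1:ℝ)) : ℝ × ℝ))
      ((fderiv ℝ Φ (t, x) (((1:ℝ), (0:ℝ)) : ℝ × ℝ)) (((0:ℝ), (1:ℝ)) : ℝ × ℝ)) t := by
    have := hAt.clm_apply (hasDerivAt_const t (((0:ℝ), (1:ℝ)) : ℝ × ℝ))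
    simpa using this
  have heq : (fun s => deriv (⇑(y s)) x) =ᶠ[nhds t]
      (fun s => Φ (s, x) (((0:ℝ), (1:ℝ)) : ℝ × ℝ)) := by
    filter_upwards [Ioi_mem_nhds ht] with s hs
    exact (hux (s, x) ⟨hs, trivial⟩).deriv
  have hmain : HasDerivAt (fun s => deriv (⇑(y s)) x)
      ((fderiv ℝ Φ (t, x) (((1:ℝ), (0:ℝ)) : ℝ × ℝ)) (((0:ℝ), (1:ℝ)) : ℝ × ℝ)) t :=
    hA.congr_of_eventuallyEq heq
  have hswap : (fderiv ℝ Φ (t, x) (((1:ℝ), (0:ℝ)) : ℝ × ℝ)) (((0:ℝ), (1:ℝ)) : ℝ × ℝ)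
      = (fderiv ℝ Φ (t, x) (((0:ℝ), (1:ℝ)) : ℝ × ℝ)) (((1:ℝ), (0:ℝ)) : ℝ × ℝ) :=
    hsymm _ _
  have hBt : HasDerivAt (fun ξ => Φ (t, ξ)) (fderiv ℝ Φ (t, x) (((0:ℝ), (1:ℝ)) : ℝ × ℝ)) x :=
    hΦ.hasFDerivAt.comp_hasDerivAt x ((hasDerivAt_const x t).prodMk (hasDerivAt_id x))
  have hB : HasDerivAt (fun ξ => Φ (t, ξ) (((1:ℝ), (0:ℝ)) : ℝ × ℝ))
      ((fderiv ℝ Φ (t, x) (((0:ℝ), (1:ℝ)) : ℝ × ℝ)) (((1:ℝ), (0:ℝ)) : ℝ × ℝ)) x := by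
    have := hBt.clm_apply (hasDerivAt_const x (((1:ℝ), (0:ℝ)) : ℝ × ℝ))
    simpa using this
  have hvrep : ∀ ξ : ℝ, Φ (t, ξ) (((1:ℝ), (0:ℝ)) : ℝ × ℝ) = -(z * σ ξ * deriv (⇑(y t)) ξ) := by
    intro ξ
    have hq : ((t, ξ) : ℝ × ℝ) ∈ Set.Ioi (0:ℝ) ×ˢ (Set.univ : Set ℝ) := ⟨ht, trivial⟩
    have h1 : HasDerivAt (fun s => y s ξ) (Φ (t, ξ) (((1:ℝ), (0:ℝ)) : ℝ × ℝ)) t :=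
      by have := ((hdiff _ hq).hasFDerivAt).comp_hasDerivAt t
          ((hasDerivAt_id t).prodMk (hasDerivAt_const t ξ)); exact this
    have h2 : HasDerivAt (fun s => y s ξ) (-(z * σ ξ * deriv (⇑(y t)) ξ)) t :=
      (hPDE t ht.le ξ).hasDerivAt (Ici_mem_nhds ht)
    exact h1.unique h2
  have hB' : HasDerivAt (fun ξ => -(z * σ ξ * deriv (⇑(y t)) ξ))
      ((fderiv ℝ Φ (t, x) (((0:ℝ), (1:ℝ)) : ℝ × ℝ)) (((1:ℝ), (0:ℝ)) : ℝ × ℝ)) x :=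
    hB.congr_of_eventuallyEq (Filter.Eventually.of_forall fun ξ => (hvrep ξ).symm)
  set W : 𝓢(ℝ, ℝ) := derivCLM ℝ ℝ (y t) with hWdef
  have hW : ⇑W = deriv (⇑(y t)) := funext fun ξ => derivCLM_apply ℝ (y t) ξ
  have hWd : HasDerivAt (fun ξ => deriv (⇑(y t)) ξ) (deriv (deriv (⇑(y t))) x) x := by
    simp only [← hW]
    exact (W.differentiableAt (x := x)).hasDerivAt
  have hprod : HasDerivAt (fun ξ => -(z * σ ξ * deriv (⇑(y t)) ξ))
      (-(z * (deriv σ x * deriv (⇑(y t)) x + σ x * deriv (deriv (⇑(y t))) x))) x := by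
    have hσd : HasDerivAt σ (deriv σ x) x := ((hσ.differentiable one_ne_zero) x).hasDerivAt
    have h1 : HasDerivAt (fun ξ => z * σ ξ) (z * deriv σ x) x := hσd.const_mul z
    have h2 := (h1.mul hWd).neg
    refine h2.congr_deriv ?_
    ring
  have huniq := hB'.unique hprod
  rw [hswap, huniq] at hmain
  exact hmain

lemma hFcont (y : ℝ → 𝓢(ℝ, ℝ)) (s : ℝ) :
    Continuous (fun x => (y s x) ^ 2 + (deriv (⇑(y s)) x) ^ 2) := by
  simp only [deriv_eq]
  exact ((y s).continuous.pow 2).add ((derivCLM ℝ ℝ (y s)).continuous.pow 2)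

lemma Ebound (hσ : ContDiff ℝ 1 σ) {M : ℝ} (hM : ∀ x : ℝ, |deriv σ x| ≤ M) (t : ℝ) :
    |∫ x, Fp z σ y t x| ≤ |z| * M * ∫ x, ((y t x) ^ 2 + (deriv (⇑(y t)) x) ^ 2) := by
  have hM0 : 0 ≤ M := (abs_nonneg _).trans (hM 0)
  set a : 𝓢(ℝ, ℝ) := y t with hadef
  set b : 𝓢(ℝ, ℝ) := derivCLM ℝ ℝ (y t) with hbdef
  set c : 𝓢(ℝ, ℝ) := derivCLM ℝ ℝ b with hcdef
  have hda : deriv (⇑a) = ⇑b := deriv_eq a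
  have hdb : deriv (⇑b) = ⇑c := deriv_eq b
  have hmσ : AEStronglyMeasurable σ (volume : Measure ℝ) := hσ.continuous.aestronglyMeasurable
  have hmσ' : AEStronglyMeasurable (deriv σ) (volume : Measure ℝ) :=
    (hσ.continuous_deriv le_rfl).aestronglyMeasurable
  have hbσ : ∀ x, |σ x| ≤ (|σ 0| + M) * (1 + x ^ 2) := sigma_growth hσ hM
  have hbσ' : ∀ x, |deriv σ x| ≤ M * (1 + x ^ 2) := fun x => by nlinarith [hM x, sq_nonneg x]
  have I1 : Integrable (fun x => σ x * (a x * b x)) := key_integrable hmσ hbσ a b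
  have I2 : Integrable (fun x => deriv σ x * (b x * b x)) := key_integrable hmσ' hbσ' b b
  have I3 : Integrable (fun x => σ x * (b x * c x)) := key_integrable hmσ hbσ b c
  have Ia : Integrable (fun x => deriv σ x * (a x * a x)) := key_integrable hmσ' hbσ' a a
  have hFp : Fp z σ y t = fun x => (-2 * z) * (σ x * (a x * b x)
      + deriv σ x * (b x * b x) + σ x * (b x * c x)) := by
    funext x
    unfold Fp
    rw [← hadef, hda, hdb]
  set Qa : ℝ := ∫ x, deriv σ x * (a x * a x) with hQadef
  set Qb : ℝ := ∫ x, deriv σ x * (b x * b x) with hQbdef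
  have P1 : ∫ x, σ x * (a x * b x) = -Qa / 2 := by
    have := ibp hσ hM a
    rw [hda] at this
    exact this
  have P3 : ∫ x, σ x * (b x * c x) = -Qb / 2 := by
    have := ibp hσ hM b
    rw [hdb] at this
    exact this
  have hsplit : ∫ x, Fp z σ y t x = z * (Qa - Qb) := by
    rw [hFp]
    have IA : Integrable (fun x => σ x * (a x * b x) + deriv σ x * (b x * b x)) :=
      I1.add I2
    rw [MeasureTheory.integral_const_mul]
    rw [integral_add IA I3, integral_add I1 I2, P1, P3]
    ring
  have hQbound : ∀ (f : 𝓢(ℝ, ℝ)), |∫ x, deriv σ x * (f x * f x)| ≤ M * ∫ x, (f x) ^ 2 := by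
    intro f
    have hIf : Integrable (fun x => deriv σ x * (f x * f x)) := key_integrable hmσ' hbσ' f f
    calc |∫ x, deriv σ x * (f x * f x)| ≤ ∫ x, |deriv σ x * (f x * f x)| := by
          rw [← Real.norm_eq_abs]
          exact (norm_integral_le_integral_norm _).trans
            (le_of_eq (by simp only [Real.norm_eq_abs]))
      _ ≤ ∫ x, M * (f x) ^ 2 := by
          refine integral_mono hIf.abs ((sq_integrable f).const_mul M) fun x => ?_
          rw [abs_mul, abs_of_nonneg (mul_self_nonneg (f x)), ← sq]
          exact mul_le_mul_of_nonneg_right (hM x) (sq_nonneg _)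
      _ = M * ∫ x, (f x) ^ 2 := MeasureTheory.integral_const_mul M _
  have hQa := hQbound a
  have hQb := hQbound b
  have hsum : ∫ x, ((y t x) ^ 2 + (deriv (⇑(y t)) x) ^ 2)
      = (∫ x, (a x) ^ 2) + ∫ x, (b x) ^ 2 := by
    rw [show (fun x => (y t x) ^ 2 + (deriv (⇑(y t)) x) ^ 2)
        = fun x => (a x) ^ 2 + (b x) ^ 2 by rw [← hadef, hda]]
    exact integral_add (sq_integrable a) (sq_integrable b)
  rw [hsplit, hsum, abs_mul]
  have h1 : |Qa - Qb| ≤ M * (∫ x, (a x) ^ 2) + M * ∫ x, (b x) ^ 2 :=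
    (abs_sub _ _).trans (add_le_add hQa hQb)
  calc |z| * |Qa - Qb| ≤ |z| * (M * (∫ x, (a x) ^ 2) + M * ∫ x, (b x) ^ 2) :=
        mul_le_mul_of_nonneg_left h1 (abs_nonneg z)
    _ = |z| * M * ((∫ x, (a x) ^ 2) + ∫ x, (b x) ^ 2) := by ring

lemma Econt (hcont : Continuous y) :
    Continuous (fun s => ∫ x, ((y s x) ^ 2 + (deriv (⇑(y s)) x) ^ 2)) := by
  rw [continuous_iff_continuousAt]
  intro t₀
  obtain ⟨C, hC0, hC⟩ := uniform_bound hcont (t₀ - 1) (t₀ + 1)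
  apply MeasureTheory.continuousAt_of_dominated (bound := fun x => 2 * (C * C) * (1 + x ^ 2)⁻¹)
  · exact Filter.Eventually.of_forall fun s => (hFcont y s).aestronglyMeasurable
  · filter_upwards [Icc_mem_nhds (show t₀ - 1 < t₀ by linarith) (show t₀ < t₀ + 1 by linarith)]
      with s hs
    refine Filter.Eventually.of_forall fun x => ?_
    obtain ⟨h1, h2, _⟩ := hC s hs
    rw [Real.norm_eq_abs, abs_of_nonneg (by positivity)]
    have b1 := sq_bound (y s) h1 x
    have b2 : (deriv (⇑(y s)) x) ^ 2 ≤ C * C * (1 + x ^ 2)⁻¹ := by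
      rw [deriv_eq]
      exact sq_bound _ h2 x
    linarith
  · exact (integrable_inv_one_add_sq).const_mul _
  · refine Filter.Eventually.of_forall fun x => ?_
    have g1 : Continuous fun s => y s x :=
      ((BoundedContinuousFunction.evalCLM ℝ x).comp (toBoundedContinuousFunctionCLM ℝ ℝ ℝ)).continuous.comp hcont
    have g2 : Continuous fun s => deriv (⇑(y s)) x := by
      simp only [deriv_eq]
      exact ((BoundedContinuousFunction.evalCLM ℝ x).comp (toBoundedContinuousFunctionCLM ℝ ℝ ℝ)).continuous.comp ((derivCLM ℝ ℝ).continuous.comp hcont)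
    exact ((g1.pow 2).add (g2.pow 2)).continuousAt

lemma EhasDeriv (hσ : ContDiff ℝ 1 σ) {M : ℝ} (hM : ∀ x : ℝ, |deriv σ x| ≤ M)
    (hcont : Continuous y)
    (hsmooth : ContDiffOn ℝ (⊤ : ℕ∞) (fun p : ℝ × ℝ => y p.1 p.2) (Set.Ici 0 ×ˢ Set.univ))
    (hPDE : ∀ t ∈ Set.Ici (0 : ℝ), ∀ x : ℝ,
      HasDerivWithinAt (fun s => y s x) (-(z * σ x * deriv (⇑(y t)) x)) (Set.Ici 0) t)
    {t : ℝ} (ht : 0 < t) :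
    HasDerivAt (fun s => ∫ x, ((y s x) ^ 2 + (deriv (⇑(y s)) x) ^ 2))
      (∫ x, Fp z σ y t x) t := by
  have hM0 : 0 ≤ M := (abs_nonneg _).trans (hM 0)
  set A := |σ 0| + M with hAdef
  have hA0 : 0 ≤ A := add_nonneg (abs_nonneg _) hM0
  obtain ⟨C, hC0, hC⟩ := uniform_bound hcont (t / 2) (t + t / 2)
  set K := 2 * |z| * (A * C * C + M * C * C + A * C * C) with hKdef
  have hball : Metric.ball t (t / 2) ⊆ Set.Icc (t / 2) (t + t / 2) := by
    intro s hs
    rw [Metric.mem_ball, Real.dist_eq, abs_sub_lt_iff] at hs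
    exact ⟨by linarith [hs.1, hs.2], by linarith [hs.1, hs.2]⟩
  have hballpos : ∀ s ∈ Metric.ball t (t / 2), 0 < s := fun s hs => by
    have h := (hball hs).1
    linarith
  have hbound : ∀ x : ℝ, ∀ s ∈ Metric.ball t (t / 2), |Fp z σ y s x| ≤ K * (1 + x ^ 2)⁻¹ := by
    intro x s hs
    obtain ⟨hB1, hB2, hB3⟩ := hC s (hball hs)
    have e1 : deriv (⇑(y s)) = ⇑(derivCLM ℝ ℝ (y s)) := deriv_eq _
    have e2 : deriv (deriv (⇑(y s))) = ⇑(derivCLM ℝ ℝ (derivCLM ℝ ℝ (y s))) := by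
      rw [e1, deriv_eq]
    have hP0 : (0 : ℝ) < (1 + x ^ 2)⁻¹ := by positivity
    have hT1 : |σ x * (y s x * deriv (⇑(y s)) x)| ≤ A * C * C * (1 + x ^ 2)⁻¹ := by
      rw [e1]
      refine (decay_helper hA0 (sigma_growth hσ hM) (y s) (derivCLM ℝ ℝ (y s)) x).trans ?_
      gcongr
      exact Bnd_nonneg _
    have hT2 : |deriv σ x * (deriv (⇑(y s)) x * deriv (⇑(y s)) x)|
        ≤ M * C * C * (1 + x ^ 2)⁻¹ := by
      rw [e1]
      refine (decay_helper hM0 (fun x => by nlinarith [hM x, sq_nonneg x] :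
        ∀ x : ℝ, |deriv σ x| ≤ M * (1 + x ^ 2)) (derivCLM ℝ ℝ (y s)) (derivCLM ℝ ℝ (y s)) x).trans ?_
      gcongr
      exact Bnd_nonneg _
    have hT3 : |σ x * (deriv (⇑(y s)) x * deriv (deriv (⇑(y s))) x)|
        ≤ A * C * C * (1 + x ^ 2)⁻¹ := by
      rw [e2, e1]
      refine (decay_helper hA0 (sigma_growth hσ hM) (derivCLM ℝ ℝ (y s))
        (derivCLM ℝ ℝ (derivCLM ℝ ℝ (y s))) x).trans ?_
      gcongr
      exact Bnd_nonneg _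
    have habs2z : |(-2 * z)| = 2 * |z| := by
      rw [abs_mul]
      norm_num
    calc |Fp z σ y s x| = 2 * |z| * |σ x * (y s x * deriv (⇑(y s)) x)
          + deriv σ x * (deriv (⇑(y s)) x * deriv (⇑(y s)) x)
          + σ x * (deriv (⇑(y s)) x * deriv (deriv (⇑(y s))) x)| := by
          unfold Fp
          rw [abs_mul, habs2z]
      _ ≤ 2 * |z| * (|σ x * (y s x * deriv (⇑(y s)) x)|
          + |deriv σ x * (deriv (⇑(y s)) x * deriv (⇑(y s)) x)|
          + |σ x * (deriv (⇑(y s)) x * deriv (deriv (⇑(y s))) x)|) :=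
          mul_le_mul_of_nonneg_left (abs_add_three _ _ _) (by positivity)
      _ ≤ 2 * |z| * (A * C * C * (1 + x ^ 2)⁻¹ + M * C * C * (1 + x ^ 2)⁻¹
          + A * C * C * (1 + x ^ 2)⁻¹) :=
          mul_le_mul_of_nonneg_left (add_le_add (add_le_add hT1 hT2) hT3) (by positivity)
      _ = K * (1 + x ^ 2)⁻¹ := by
          rw [hKdef]
          ring
  have key := hasDerivAt_integral_of_dominated_loc_of_deriv_le
    (F := fun s x => (y s x) ^ 2 + (deriv (⇑(y s)) x) ^ 2)
    (F' := fun s x => Fp z σ y s x)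
    (bound := fun x => K * (1 + x ^ 2)⁻¹)
    (μ := (volume : Measure ℝ)) (x₀ := t)
    (Metric.ball_mem_nhds t (show (0:ℝ) < t / 2 by linarith))
    (Filter.Eventually.of_forall fun s => (hFcont y s).aestronglyMeasurable)
    ((sq_integrable (y t)).add (sq_deriv_integrable (y t)))
    ?_ ?_ ?_ ?_
  · exact key.2
  · -- measurability of F' t
    have : Continuous (Fp z σ y t) := by
      unfold Fp
      simp only [deriv_eq]
      exact continuous_const.mul (((hσ.continuous.mul ((y t).continuous.mul
        (derivCLM ℝ ℝ (y t)).continuous)).add ((hσ.continuous_deriv le_rfl).mul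
        ((derivCLM ℝ ℝ (y t)).continuous.mul (derivCLM ℝ ℝ (y t)).continuous))).add
        (hσ.continuous.mul ((derivCLM ℝ ℝ (y t)).continuous.mul
        (derivCLM ℝ ℝ (derivCLM ℝ ℝ (y t))).continuous)))
    exact this.aestronglyMeasurable
  · exact Filter.Eventually.of_forall fun x s hs => by
      rw [Real.norm_eq_abs]
      exact hbound x s hs
  · exact (integrable_inv_one_add_sq).const_mul K
  · refine Filter.Eventually.of_forall fun x s hs => ?_
    have hs0 : 0 < s := hballpos s hs
    have hy : HasDerivAt (fun s => y s x) (-(z * σ x * deriv (⇑(y s)) x)) s :=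
      (hPDE s hs0.le x).hasDerivAt (Ici_mem_nhds hs0)
    have hw := wPDE hσ hsmooth hPDE hs0 x
    have hsum := (hy.pow 2).add (hw.pow 2)
    convert hsum using 1
    · rfl
    unfold Fp
    push_cast
    ring

end Main

end Stmt2Aux

open Stmt2Aux

/-- The squared `H¹` norm: `‖w‖_{H¹}² = ∫ (w² + (w')²)`. -/
noncomputable def H1sq (w : ℝ → ℝ) : ℝ := ∫ x : ℝ, ((w x) ^ 2 + (deriv w x) ^ 2)

/-- Let `z ∈ ℝ` and `σ` be C¹ with derivative bounded by `M`. If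
`y : [0,∞) × ℝ → ℝ` is smooth, `t ↦ y(t,·)` is a C¹ map into Schwartz space (encoded here by
the Schwartz-valued curve being continuous, the joint function being smooth on `[0,∞) × ℝ`, and
the time derivative existing pointwise), and `y` solves the transport equation
`∂_t y = −z σ ∂_x y`, then `‖y(t,·)‖_{H¹}² ≤ ‖y(0,·)‖_{H¹}² e^{|z| ‖σ'‖_{L^∞} t}` for `t ≥ 0`. -/
theorem stmt2 (z : ℝ) (σ : ℝ → ℝ) (hσ : ContDiff ℝ 1 σ) (M : ℝ)
    (hM : ∀ x : ℝ, |deriv σ x| ≤ M)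
    (y : ℝ → 𝓢(ℝ, ℝ))
    (hsmooth : ContDiffOn ℝ (⊤ : ℕ∞) (fun p : ℝ × ℝ => y p.1 p.2) (Set.Ici 0 ×ˢ Set.univ))
    (hcont : Continuous y)
    (hPDE : ∀ t ∈ Set.Ici (0 : ℝ), ∀ x : ℝ,
      HasDerivWithinAt (fun s => y s x) (-(z * σ x * deriv (⇑(y t)) x)) (Set.Ici 0) t) :
    ∀ t ∈ Set.Ici (0 : ℝ),
      H1sq (⇑(y t)) ≤ H1sq (⇑(y 0)) * Real.exp (|z| * M * t) := by
  intro t htmem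
  have ht0 : (0:ℝ) ≤ t := htmem
  have hM0 : 0 ≤ M := (abs_nonneg _).trans (hM 0)
  set E : ℝ → ℝ := fun s => ∫ x, ((y s x) ^ 2 + (deriv (⇑(y s)) x) ^ 2) with hEdef
  have hH1 : ∀ s : ℝ, H1sq (⇑(y s)) = E s := fun s => rfl
  have hEnonneg : ∀ s : ℝ, 0 ≤ E s := fun s =>
    integral_nonneg fun x => by positivity
  rcases eq_or_lt_of_le ht0 with h0 | hpos
  · rw [← h0]
    simp [hH1]
  · rw [hH1, hH1]
    have hEcont : Continuous E := Econt hcont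
    have hder : ∀ s : ℝ, 0 < s → HasDerivAt E (∫ x, Fp z σ y s x) s := fun s hs =>
      EhasDeriv hσ hM hcont hsmooth hPDE hs
    have hbnd : ∀ s : ℝ, |∫ x, Fp z σ y s x| ≤ |z| * M * E s := fun s => Ebound hσ hM s
    have key : ∀ s ∈ Set.Ioc (0:ℝ) t, E t ≤ E s * Real.exp (|z| * M * (t - s)) := by
      intro s hs
      have hgron := norm_le_gronwallBound_of_norm_deriv_right_le
        (f := E) (f' := fun τ => ∫ x, Fp z σ y τ x) (δ := E s) (K := |z| * M) (ε := 0)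
        (a := s) (b := t)
        hEcont.continuousOn
        (fun τ hτ => (hder τ (lt_of_lt_of_le hs.1 hτ.1)).hasDerivWithinAt)
        (by rw [Real.norm_eq_abs, abs_of_nonneg (hEnonneg s)])
        (fun τ hτ => by
          rw [Real.norm_eq_abs, Real.norm_eq_abs, abs_of_nonneg (hEnonneg τ), add_zero]
          exact hbnd τ)
        t (Set.right_mem_Icc.mpr hs.2)
      rw [Real.norm_eq_abs, abs_of_nonneg (hEnonneg t), gronwallBound_ε0] at hgron
      exact hgron
    have hlim : Filter.Tendsto (fun s => E s * Real.exp (|z| * M * (t - s)))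
        (nhdsWithin 0 (Set.Ioi 0)) (nhds (E 0 * Real.exp (|z| * M * t))) := by
      have h1 : Filter.Tendsto (fun s : ℝ => E s * Real.exp (|z| * M * (t - s)))
          (nhds 0) (nhds (E 0 * Real.exp (|z| * M * (t - 0)))) := by
        exact ((hEcont.mul (Real.continuous_exp.comp
          (continuous_const.mul (continuous_const.sub continuous_id)))).tendsto 0)
      rw [sub_zero] at h1
      exact h1.mono_left nhdsWithin_le_nhds
    have hev : ∀ᶠ s in nhdsWithin 0 (Set.Ioi 0),
        E t ≤ E s * Real.exp (|z| * M * (t - s)) := by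
      filter_upwards [Ioc_mem_nhdsGT hpos] with s hs
      exact key s hs
    exact ge_of_tendsto hlim hev
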